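/- For every short exact sequence of finite dimensional A-modules 0 → M → L → N → 0, one has dim_k End_A(L) ≤ dim_k End_A(M ⊕ N), and equality holds if and only if the sequence splits. -/

import Mathlib

open CategoryTheory

universe u v w

/-! ### Finite quivers -/

/-- A finite quiver on `n` vertices, given by the number of arrows between any two vertices. -/
structure QuivData (n : ℕ) where
  arrows : Fin n → Fin n → ℕ

namespace QuivData

variable {n : ℕ} (Q : QuivData n)

/-- There is an arrow from `i` to `j`. -/
def Step (i j : Fin n) : Prop := Q.arrows i j ≠ 0

/-- There is a (directed) path of length `≥ 1` from `i` to `j`. -/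
def HasPath (i j : Fin n) : Prop := Relation.TransGen Q.Step i j

/-- The quiver has no (directed) cycles. -/
def Acyclic : Prop := ∀ i, ¬ Q.HasPath i i

/-- There exists a path of length at least two between `i` and `j`
(in one direction or the other). -/
def HasLongPath (i j : Fin n) : Prop :=
  (∃ l, Q.HasPath i l ∧ Q.Step l j) ∨ (∃ l, Q.HasPath j l ∧ Q.Step l i)

/-- The underlying graph of the quiver. -/
def graph : SimpleGraph (Fin n) where
  Adj i j := i ≠ j ∧ Q.arrows i j + Q.arrows j i ≠ 0
  symm := ⟨fun i j h => ⟨Ne.symm h.1, fun c => h.2 (by omega)⟩⟩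
  loopless := ⟨fun i h => h.1 rfl⟩

/-- The symmetrized matrix `2I - (adjacency matrix)` of the underlying graph. -/
def symMat : Matrix (Fin n) (Fin n) ℚ := fun i j =>
  if i = j then 2 - 2 * (Q.arrows i i : ℚ) else -((Q.arrows i j : ℚ) + (Q.arrows j i : ℚ))

/-- `Q` is a Dynkin quiver (of type `A`, `D` or `E`): it is acyclic, its underlying graph is
connected, and the symmetrized Euler matrix is positive definite.  Among connected graphs,
positive definiteness of this matrix characterizes exactly the `ADE` Dynkin diagrams. -/
def IsDynkin : Prop := Q.Acyclic ∧ Q.graph.Connected ∧ Q.symMat.PosDef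

/-- The Tits quadratic form of the quiver. -/
def titsForm (x : Fin n → ℕ) : ℤ :=
  ∑ i, (x i : ℤ) ^ 2 - ∑ i, ∑ j, (Q.arrows i j : ℤ) * (x i : ℤ) * (x j : ℤ)

/-- The positive roots of the simple Lie algebra attached to the underlying graph of `Q`;
by Gabriel's theorem these are exactly the nonzero dimension vectors on which the
Tits form takes the value `1`. -/
def PosRoot : Type := {x : Fin n → ℕ // x ≠ 0 ∧ Q.titsForm x = 1}

/-- `i` is a sink. -/
def IsSink (i : Fin n) : Prop := ∀ j, Q.arrows i j = 0

/-- `i` is a source. -/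
def IsSource (i : Fin n) : Prop := ∀ j, Q.arrows j i = 0

/-- Every vertex is a sink or a source. -/
def Bipartite : Prop := ∀ i, Q.IsSink i ∨ Q.IsSource i

/-- Generators of the path algebra: one for each vertex, one for each arrow. -/
def Gens : Type := Fin n ⊕ Σ i j : Fin n, Fin (Q.arrows i j)

end QuivData

/-! ### Path algebras -/

variable (k : Type) [Field k]

/-- The relations presenting the path algebra `kQ` as a quotient of the free algebra on the
vertices (giving the pairwise orthogonal idempotents `e_i` with `∑ e_i = 1`) and the arrows
(with `a = e_j * a * e_i` for an arrow `a : i → j`). -/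
inductive PathRel {n : ℕ} (Q : QuivData n) :
    FreeAlgebra k Q.Gens → FreeAlgebra k Q.Gens → Prop
  | idem (i : Fin n) :
      PathRel Q (FreeAlgebra.ι k (Sum.inl i) * FreeAlgebra.ι k (Sum.inl i))
        (FreeAlgebra.ι k (Sum.inl i))
  | orth (i j : Fin n) (h : i ≠ j) :
      PathRel Q (FreeAlgebra.ι k (Sum.inl i) * FreeAlgebra.ι k (Sum.inl j)) 0
  | sum_one : PathRel Q (∑ i : Fin n, FreeAlgebra.ι k (Sum.inl i)) 1
  | arrow (i j : Fin n) (a : Fin (Q.arrows i j)) :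
      PathRel Q (FreeAlgebra.ι k (Sum.inl j) * FreeAlgebra.ι k (Sum.inr ⟨i, j, a⟩) *
        FreeAlgebra.ι k (Sum.inl i)) (FreeAlgebra.ι k (Sum.inr ⟨i, j, a⟩))

/-- The path algebra `A = kQ` of the quiver `Q` over `k`. -/
def PathAlg {n : ℕ} (Q : QuivData n) : Type := RingQuot (PathRel k Q)

noncomputable instance {n : ℕ} (Q : QuivData n) : Ring (PathAlg k Q) :=
  inferInstanceAs (Ring (RingQuot (PathRel k Q)))

noncomputable instance {n : ℕ} (Q : QuivData n) : Algebra k (PathAlg k Q) :=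
  inferInstanceAs (Algebra k (RingQuot (PathRel k Q)))

/-- The idempotent `e_i` of the path algebra attached to the vertex `i`. -/
noncomputable def eVert {n : ℕ} (Q : QuivData n) (i : Fin n) : PathAlg k Q :=
  RingQuot.mkAlgHom k (PathRel k Q) (FreeAlgebra.ι k (Sum.inl i))

theorem eVert_mul_self {n : ℕ} (Q : QuivData n) (i : Fin n) :
    eVert k Q i * eVert k Q i = eVert k Q i := by
  have h := RingQuot.mkAlgHom_rel k (PathRel.idem (k := k) (Q := Q) i)
  exact (map_mul (RingQuot.mkAlgHom k (PathRel k Q)) _ _).symm.trans h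

/-- The indecomposable projective module `P_i = (kQ)·e_i`, as a submodule of the path algebra. -/
noncomputable def projSub {n : ℕ} (Q : QuivData n) (i : Fin n) :
    Submodule (PathAlg k Q) (PathAlg k Q) :=
  Submodule.span (PathAlg k Q) {eVert k Q i}

/-- The indecomposable projective module `P_i = (kQ)·e_i`. -/
noncomputable abbrev ProjMod {n : ℕ} (Q : QuivData n) (i : Fin n) : Type :=
  ↥(projSub k Q i)

/-- Right multiplication by `e_i`, as a splitting of the inclusion `P_i ⊆ kQ`. -/
noncomputable def mulVert {n : ℕ} (Q : QuivData n) (i : Fin n) :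
    PathAlg k Q →ₗ[PathAlg k Q] ProjMod k Q i where
  toFun x := ⟨x * eVert k Q i, Submodule.mem_span_singleton.2 ⟨x, (smul_eq_mul _ _).trans rfl⟩⟩
  map_add' x y := Subtype.ext (add_mul x y _)
  map_smul' a x := Subtype.ext (by simp [smul_eq_mul, mul_assoc])

theorem mulVert_comp_subtype {n : ℕ} (Q : QuivData n) (i : Fin n) :
    (mulVert k Q i) ∘ₗ (projSub k Q i).subtype = LinearMap.id := by
  ext x
  obtain ⟨a, ha⟩ := Submodule.mem_span_singleton.1 x.2
  have : (x : PathAlg k Q) * eVert k Q i = (x : PathAlg k Q) := by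
    rw [← ha, smul_eq_mul, mul_assoc, eVert_mul_self]
  simpa [mulVert, Subtype.ext_iff] using this

theorem projMod_projective {n : ℕ} (Q : QuivData n) (i : Fin n) :
    Module.Projective (PathAlg k Q) (ProjMod k Q i) :=
  Module.Projective.of_split (projSub k Q i).subtype (mulVert k Q i) (mulVert_comp_subtype k Q i)

theorem projMod_finite {n : ℕ} (Q : QuivData n) (i : Fin n) :
    Module.Finite (PathAlg k Q) (ProjMod k Q i) :=
  Module.Finite.iff_fg.2 (Submodule.fg_span_singleton _)

/-! ### The category `C₁(𝒫)` of 1-cyclic complexes of projective modules -/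

/-- An object of `C₁(𝒫)`: a finite dimensional projective `A`-module `P` together with an
endomorphism `d` with `d² = 0`. -/
structure Cyc (A : Type v) [Ring A] : Type (v + 1) where
  carrier : Type v
  [acg : AddCommGroup carrier]
  [mod : Module A carrier]
  projective : Module.Projective A carrier
  finite : Module.Finite A carrier
  d : carrier →ₗ[A] carrier
  dsq : d ∘ₗ d = 0

attribute [instance] Cyc.acg Cyc.mod Cyc.projective Cyc.finite

namespace Cyc

variable {A : Type v} [Ring A]

instance : Category.{v} (Cyc A) where
  Hom X Y := {f : X.carrier →ₗ[A] Y.carrier // Y.d ∘ₗ f = f ∘ₗ X.d}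
  id X := ⟨LinearMap.id, by rw [LinearMap.comp_id, LinearMap.id_comp]⟩
  comp {X Y Z} f g := ⟨g.1 ∘ₗ f.1, by
    rw [← LinearMap.comp_assoc, g.2, LinearMap.comp_assoc, f.2, ← LinearMap.comp_assoc]⟩
  id_comp f := Subtype.ext (LinearMap.comp_id _)
  comp_id f := Subtype.ext (LinearMap.id_comp _)
  assoc f g h := Subtype.ext (LinearMap.comp_assoc _ _ _).symm

/-- The underlying linear map of a morphism in `C₁(𝒫)`. -/
def homMap {X Y : Cyc A} (f : X ⟶ Y) : X.carrier →ₗ[A] Y.carrier := f.1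

/-- Construct a morphism in `C₁(𝒫)`. -/
def mkHom {X Y : Cyc A} (f : X.carrier →ₗ[A] Y.carrier) (h : Y.d ∘ₗ f = f ∘ₗ X.d) :
    X ⟶ Y := ⟨f, h⟩

/-- The zero morphism. -/
def zeroHom (X Y : Cyc A) : X ⟶ Y := mkHom 0 (by simp)

/-- An object of `C₁(𝒫)` is indecomposable if it is nonzero and admits no nontrivial
idempotent endomorphism. -/
def Indec (X : Cyc A) : Prop :=
  Nontrivial X.carrier ∧ ∀ e : X ⟶ X, e ≫ e = e → e = 𝟙 X ∨ e = zeroHom X X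

/-- A composable pair of morphisms is a conflation (that is, a componentwise short exact
sequence `0 → Y → Z → X → 0` in `C₁(𝒫)`). -/
def IsConflation {X Y Z : Cyc A} (φ : Y ⟶ Z) (ψ : Z ⟶ X) : Prop :=
  Function.Injective (homMap φ) ∧ Function.Surjective (homMap ψ) ∧
    LinearMap.range (homMap φ) = LinearMap.ker (homMap ψ)

/-- The set of short exact sequences `0 → Y → Z → X → 0` in `C₁(𝒫)`. -/
def SES (X Y Z : Cyc A) : Type v := {p : (Y ⟶ Z) × (Z ⟶ X) // IsConflation p.1 p.2}

/-- The orbit relation for the free action of `Aut X × Aut Y` on the short exact sequences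
`0 → Y → Z → X → 0`, given by `(f, g) · (φ, ψ) = (φ ∘ g⁻¹, f ∘ ψ)`. -/
def sesRel (X Y Z : Cyc A) (p q : SES X Y Z) : Prop :=
  ∃ (f : X ≅ X) (g : Y ≅ Y), q.1.1 = g.inv ≫ p.1.1 ∧ q.1.2 = p.1.2 ≫ f.hom

/-- The Hall number `F^Z_{X Y}`: the number of short exact sequences `0 → Y → Z → X → 0`
in `C₁(𝒫)` modulo the (free) action of `Aut X × Aut Y`. -/
noncomputable def hallNum (X Y Z : Cyc A) : ℕ := Nat.card (Quot (sesRel X Y Z))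

/-- A deflation is a morphism appearing as the epimorphism in some conflation. -/
def IsDeflation {Z W : Cyc A} (ψ : Z ⟶ W) : Prop := ∃ (Y : Cyc A) (φ : Y ⟶ Z), IsConflation φ ψ

/-- An inflation is a morphism appearing as the monomorphism in some conflation. -/
def IsInflation {Y Z : Cyc A} (φ : Y ⟶ Z) : Prop := ∃ (W : Cyc A) (ψ : Z ⟶ W), IsConflation φ ψ

/-- A projective object of the exact category `C₁(𝒫)`. -/
def ProjObj (P : Cyc A) : Prop :=
  ∀ ⦃Z W : Cyc A⦄ (ψ : Z ⟶ W), IsDeflation ψ → ∀ g : P ⟶ W, ∃ h : P ⟶ Z, h ≫ ψ = g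

/-- An injective object of the exact category `C₁(𝒫)`. -/
def InjObj (I : Cyc A) : Prop :=
  ∀ ⦃Y Z : Cyc A⦄ (φ : Y ⟶ Z), IsInflation φ → ∀ g : Y ⟶ I, ∃ h : Z ⟶ I, φ ≫ h = g

end Cyc

/-- The isomorphism classes of objects of `C₁(𝒫)`. -/
def IsoCls (A : Type v) [Ring A] : Type (v + 1) :=
  Quotient (CategoryTheory.isIsomorphicSetoid (Cyc A))

/-- The isomorphism class of an object of `C₁(𝒫)`. -/
def Cyc.cls {A : Type v} [Ring A] (X : Cyc A) : IsoCls A :=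
  Quotient.mk (CategoryTheory.isIsomorphicSetoid (Cyc A)) X

namespace Cyc

variable {A : Type v} [Ring A]

/-- The shift: `(P, d) [1] = (P, -d)`. -/
def shift (X : Cyc A) : Cyc A where
  carrier := X.carrier
  projective := X.projective
  finite := X.finite
  d := -X.d
  dsq := by rw [LinearMap.neg_comp, LinearMap.comp_neg, neg_neg, X.dsq]

/-- The homology `H₀(P, d) = ker d / im d` of a 1-cyclic complex. -/
abbrev H0 (X : Cyc A) : Type v :=
  ↥(LinearMap.ker X.d) ⧸ (LinearMap.range X.d).comap (LinearMap.ker X.d).subtype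

/-- The direct sum of two objects of `C₁(𝒫)`. -/
def dsum (X Y : Cyc A) : Cyc A where
  carrier := X.carrier × Y.carrier
  projective := inferInstance
  finite := inferInstance
  d := X.d.prodMap Y.d
  dsq := by
    apply LinearMap.ext; intro p
    have hx := LinearMap.congr_fun X.dsq p.1
    have hy := LinearMap.congr_fun Y.dsq p.2
    simp only [LinearMap.comp_apply, LinearMap.prodMap_apply, LinearMap.zero_apply] at *
    exact Prod.ext hx hy

theorem projective_pi {R : Type*} [Ring R] {ι : Type*} [Fintype ι] [DecidableEq ι]
    {M : ι → Type*} [∀ i, AddCommGroup (M i)] [∀ i, Module R (M i)]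
    (h : ∀ i, Module.Projective R (M i)) : Module.Projective R (∀ i, M i) := by
  haveI := h
  haveI : Module.Projective R (DirectSum ι M) :=
    inferInstanceAs (Module.Projective R (Π₀ i, M i))
  exact Module.Projective.of_equiv (DirectSum.linearEquivFunOnFintype R ι M)

/-- The direct sum of `m` copies of an object of `C₁(𝒫)`. -/
def pow (X : Cyc A) (m : ℕ) : Cyc A where
  carrier := Fin m → X.carrier
  projective := projective_pi fun _ => X.projective
  finite := Module.Finite.pi
  d := LinearMap.pi fun i => X.d ∘ₗ LinearMap.proj i
  dsq := by
    apply LinearMap.ext; intro v; funext i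
    have := LinearMap.congr_fun X.dsq (v i)
    simpa using this

/-- A finite direct sum `⊕_{i ∈ supp λ} λ(i)·(f i)` of objects of `C₁(𝒫)`. -/
noncomputable def big {ι : Type} [DecidableEq ι] (f : ι → Cyc A) (lam : ι →₀ ℕ) : Cyc A where
  carrier := ∀ i : lam.support, Fin (lam i) → (f i).carrier
  projective := projective_pi fun i => projective_pi fun _ => (f i).projective
  finite := Module.Finite.pi
  d := LinearMap.pi fun i => (LinearMap.pi fun j => (f i).d ∘ₗ LinearMap.proj j) ∘ₗ
    LinearMap.proj i
  dsq := by
    apply LinearMap.ext; intro v; funext i j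
    have := LinearMap.congr_fun (f i).dsq (v i j)
    simpa using this

end Cyc

/-- The object of `C₁(𝒫)` attached to a projective module: `C_P = (P, 0)`. -/
def CycOfProj {A : Type v} [Ring A] (P : Type v) [AddCommGroup P] [Module A P]
    (hp : Module.Projective A P) (hf : Module.Finite A P) : Cyc A where
  carrier := P
  projective := hp
  finite := hf
  d := 0
  dsq := by simp

/-- The object `C_f = (P ⊕ Ω, ((0,f),(0,0)))` of `C₁(𝒫)` attached to a homomorphism
`f : Ω → P` of projective modules. -/
def CycOfMap {A : Type v} [Ring A] {P Ω : Type v} [AddCommGroup P] [Module A P]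
    [AddCommGroup Ω] [Module A Ω] (hp : Module.Projective A P) (hf : Module.Finite A P)
    (hp' : Module.Projective A Ω) (hf' : Module.Finite A Ω) (f : Ω →ₗ[A] P) : Cyc A where
  carrier := P × Ω
  projective := letI := hp; letI := hp'; inferInstance
  finite := letI := hf; letI := hf'; inferInstance
  d := LinearMap.inl A P Ω ∘ₗ f ∘ₗ LinearMap.snd A P Ω
  dsq := by apply LinearMap.ext; intro p; simp

/-- The projective-injective object `K_P = C_{Id_P}` of `C₁(𝒫)`. -/
def KLift {A : Type v} [Ring A] (P : Type v) [AddCommGroup P] [Module A P]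
    (hp : Module.Projective A P) (hf : Module.Finite A P) : Cyc A :=
  CycOfMap hp hf hp hf LinearMap.id

/-- `C_{P_i} = (P_i, 0)` for the indecomposable projective `P_i`. -/
noncomputable def CycP {n : ℕ} (k : Type) [Field k] (Q : QuivData n) (i : Fin n) :
    Cyc (PathAlg k Q) :=
  CycOfProj (ProjMod k Q i) (projMod_projective k Q i) (projMod_finite k Q i)

/-- `K_{P_i} = C_{Id_{P_i}}` for the indecomposable projective `P_i`. -/
noncomputable def KP {n : ℕ} (k : Type) [Field k] (Q : QuivData n) (i : Fin n) :
    Cyc (PathAlg k Q) :=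
  KLift (ProjMod k Q i) (projMod_projective k Q i) (projMod_finite k Q i)

/-! ### Dimension vectors and the Euler form -/

/-- The dimension vector of a module over the path algebra:
`(dim M)_i = dim_k (e_i · M)`. -/
noncomputable def dimVec {n : ℕ} (k : Type) [Field k] (Q : QuivData n) (M : Type*)
    [AddCommGroup M] [Module (PathAlg k Q) M] : Fin n → ℕ := fun i =>
  letI : Module k M := Module.compHom M (algebraMap k (PathAlg k Q))
  Module.finrank k ↥(LinearMap.range
    ({ toFun := fun x => eVert k Q i • x
       map_add' := fun x y => smul_add _ x y
       map_smul' := fun c x => by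
         show eVert k Q i • ((algebraMap k (PathAlg k Q) c) • x) =
           (algebraMap k (PathAlg k Q) c) • (eVert k Q i • x)
         rw [smul_smul, smul_smul, Algebra.commutes] } : M →ₗ[k] M))

/-- The Euler form of the quiver `Q` on dimension vectors:
`⟨x, y⟩ = ∑ᵢ xᵢ yᵢ - ∑_{a : i → j} xᵢ yⱼ`. -/
def eulerVec {n : ℕ} (Q : QuivData n) (x y : Fin n → ℕ) : ℤ :=
  ∑ i, (x i : ℤ) * (y i : ℤ) - ∑ i, ∑ j, (Q.arrows i j : ℤ) * (x i : ℤ) * (y j : ℤ)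

/-- The Euler form `⟨M, N⟩ = dim Hom(M,N) - dim Ext¹(M,N)` of modules over the (hereditary)
path algebra, computed by the standard formula in terms of dimension vectors. -/
noncomputable def eulerMod {n : ℕ} (k : Type) [Field k] (Q : QuivData n)
    (M N : Type*) [AddCommGroup M] [Module (PathAlg k Q) M]
    [AddCommGroup N] [Module (PathAlg k Q) N] : ℤ :=
  eulerVec Q (dimVec k Q M) (dimVec k Q N)

/-! ### Hom spaces in the homotopy category and extension groups -/

namespace Cyc

variable {A : Type v} [Ring A]

/-- The abelian group of chain maps `X → Y`. -/
def homSubgroup (X Y : Cyc A) : AddSubgroup (X.carrier →ₗ[A] Y.carrier) where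
  carrier := {f | Y.d ∘ₗ f = f ∘ₗ X.d}
  add_mem' := by
    intro a b ha hb
    simp only [Set.mem_setOf_eq, LinearMap.comp_add, LinearMap.add_comp] at *
    rw [ha, hb]
  zero_mem' := by simp
  neg_mem' := by
    intro a ha
    simp only [Set.mem_setOf_eq, LinearMap.comp_neg, LinearMap.neg_comp] at *
    rw [ha]

/-- The subgroup of null-homotopic chain maps, `f = s ∘ d_X + d_Y ∘ s`. -/
def htpySubgroup (X Y : Cyc A) : AddSubgroup ↥(homSubgroup X Y) where
  carrier := {f | ∃ s : X.carrier →ₗ[A] Y.carrier,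
    (f : X.carrier →ₗ[A] Y.carrier) = s ∘ₗ X.d + Y.d ∘ₗ s}
  add_mem' := by
    rintro a b ⟨s, hs⟩ ⟨t, ht⟩
    exact ⟨s + t, by
      push_cast [hs, ht]
      rw [LinearMap.add_comp, LinearMap.comp_add]
      abel⟩
  zero_mem' := ⟨0, by simp⟩
  neg_mem' := by
    rintro a ⟨s, hs⟩
    exact ⟨-s, by
      push_cast [hs]
      rw [LinearMap.neg_comp, LinearMap.comp_neg]
      abel⟩

/-- The Hom-space `Hom_{K₁(𝒫)}(X, Y)` in the homotopy category: chain maps modulo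
homotopy. -/
def HomK (X Y : Cyc A) : Type v := ↥(homSubgroup X Y) ⧸ htpySubgroup X Y

/-- A conflation `0 → Y → Z → X → 0` with fixed end terms. -/
structure Conflation (X Y : Cyc A) : Type (v + 1) where
  mid : Cyc A
  i : Y ⟶ mid
  p : mid ⟶ X
  conf : IsConflation i p

/-- Equivalence of conflations (morphisms of short exact sequences fixing the end terms;
    such a morphism is automatically an isomorphism). -/
def conflationRel (X Y : Cyc A) (a b : Conflation X Y) : Prop :=
  ∃ h : a.mid ⟶ b.mid, a.i ≫ h = b.i ∧ h ≫ b.p = a.p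

/-- The extension group `Ext¹_{C₁(𝒫)}(X, Y)`: equivalence classes of conflations
`0 → Y → Z → X → 0`. -/
def ExtC (X Y : Cyc A) : Type (v + 1) := Quot (conflationRel X Y)

end Cyc

/-- An indecomposable module: nonzero, with no nontrivial idempotent endomorphism. -/
def ModIndec (A : Type v) [Ring A] (M : Type v) [AddCommGroup M] [Module A M] : Prop :=
  Nontrivial M ∧ ∀ e : M →ₗ[A] M, e ∘ₗ e = e → e = LinearMap.id ∨ e = 0

/-! ### Hall algebras -/

/-- The Hall algebra `H(C₁(𝒫))`: a `ℂ`-algebra with basis the isomorphism classes of objects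
of `C₁(𝒫)`, the product of two basis elements having the Hall numbers as coefficients:
`[X]·[Y] = ∑_{[Z]} F^Z_{X Y} [Z]`. -/
structure HallAlg (k : Type) [Field k] {n : ℕ} (Q : QuivData n) where
  carrier : Type w
  [ring : Ring carrier]
  [alg : Algebra ℂ carrier]
  bas : Module.Basis (IsoCls (PathAlg k Q)) ℂ carrier
  mul_bas : ∀ X Y Z : Cyc (PathAlg k Q),
    (bas.repr (bas (Cyc.cls X) * bas (Cyc.cls Y))) (Cyc.cls Z) = (Cyc.hallNum X Y Z : ℂ)

attribute [instance] HallAlg.ring HallAlg.alg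

/-- The twisted Hall algebra `H_tw(C₁(𝒫))`, with multiplication
`[X] * [Y] = v^{-⟨Y₀, X₀⟩} ∑_{[Z]} F^Z_{X Y} [Z]` where `v = √q`. -/
structure TwHallAlg (k : Type) [Field k] [Fintype k] {n : ℕ} (Q : QuivData n) where
  carrier : Type w
  [ring : Ring carrier]
  [alg : Algebra ℂ carrier]
  bas : Module.Basis (IsoCls (PathAlg k Q)) ℂ carrier
  mul_bas : ∀ X Y Z : Cyc (PathAlg k Q),
    (bas.repr (bas (Cyc.cls X) * bas (Cyc.cls Y))) (Cyc.cls Z) =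
      (Real.sqrt (Fintype.card k) : ℂ) ^ (-(eulerMod k Q Y.carrier X.carrier)) *
        (Cyc.hallNum X Y Z : ℂ)

attribute [instance] TwHallAlg.ring TwHallAlg.alg

/-! ### Parametrization of the objects of `C₁(𝒫)` and Hall polynomials -/

/-- `𝔓₁(Γ)`: the parametrizing set of the isomorphism classes of objects of `C₁(𝒫)`;
`λ(α)` is the multiplicity of `C_{M(α)}` for a positive root `α`, and `λ(i)` the multiplicity
of `K_{P_i}` for a vertex `i`. -/
def Param {n : ℕ} (Q : QuivData n) : Type := (Q.PosRoot ⊕ Fin n) →₀ ℕ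

/-- A realization over the field `k` of the parametrizing data: a choice, for every positive
root `α`, of an object `C_{M(α)}` of `C₁(𝒫)`; these are exactly the indecomposable
non-projective objects `X` with `dim H₀(X) = α`. -/
structure Realization (k : Type) [Field k] {n : ℕ} (Q : QuivData n) where
  Cobj : Q.PosRoot → Cyc (PathAlg k Q)
  indec : ∀ α, (Cobj α).Indec
  nonproj : ∀ α, ¬ Cyc.ProjObj (Cobj α)
  dvec : ∀ α, dimVec k Q (Cyc.H0 (Cobj α)) = α.1

/-- The object `C(λ) = (⊕_α λ(α) C_{M(α)}) ⊕ (⊕_i λ(i) K_{P_i})` of `C₁(𝒫)` attached to a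
parameter `λ ∈ 𝔓₁(Γ)`. -/
noncomputable def Realization.obj {k : Type} [Field k] {n : ℕ} {Q : QuivData n}
    (R : Realization k Q) (lam : Param Q) : Cyc (PathAlg k Q) :=
  letI := Classical.decEq (Q.PosRoot ⊕ Fin n)
  Cyc.big (Sum.elim R.Cobj fun i => KP k Q i) lam

/-- The degenerate Hall algebra `H₁(C₁(𝒫))`: basis indexed by `𝔓₁(Γ)`, with structure
constants the values at `1` of the Hall polynomials, i.e. of the polynomials whose value at
every prime power `q` is the corresponding Hall number of `C₁(𝒫)` over `F_q`. -/
structure DegHall {n : ℕ} (Q : QuivData n) where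
  carrier : Type w
  [ring : Ring carrier]
  [alg : Algebra ℂ carrier]
  bas : Module.Basis (Param Q) ℂ carrier
  mul_bas : ∀ μ ν lam : Param Q, ∃ ψ : Polynomial ℤ,
    (bas.repr (bas μ * bas ν)) lam = ((ψ.eval 1 : ℤ) : ℂ) ∧
    ∀ (p m : ℕ) [Fact p.Prime], 0 < m →
      ∀ R : Realization (GaloisField p m) Q,
        ψ.eval ((p : ℤ) ^ m) = Cyc.hallNum (R.obj μ) (R.obj ν) (R.obj lam)

attribute [instance] DegHall.ring DegHall.alg

/-! ### Modules, module Hall numbers and the degenerate Hall algebra of `A` -/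

/-- A bundled finite dimensional module. -/
structure ModB (A : Type v) [Ring A] : Type (v + 1) where
  carrier : Type v
  [acg : AddCommGroup carrier]
  [mod : Module A carrier]
  finite : Module.Finite A carrier

attribute [instance] ModB.acg ModB.mod ModB.finite

namespace ModB

variable {A : Type v} [Ring A]

/-- Short exact sequences of modules `0 → Y → Z → X → 0`. -/
def SES (X Y Z : ModB A) : Type v :=
  {p : (Y.carrier →ₗ[A] Z.carrier) × (Z.carrier →ₗ[A] X.carrier) //
    Function.Injective p.1 ∧ Function.Surjective p.2 ∧ LinearMap.range p.1 = LinearMap.ker p.2}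

/-- The orbit relation of the free action of `Aut X × Aut Y` on short exact sequences. -/
def sesRel (X Y Z : ModB A) (p q : SES X Y Z) : Prop :=
  ∃ (f : X.carrier ≃ₗ[A] X.carrier) (g : Y.carrier ≃ₗ[A] Y.carrier),
    q.1.1 = p.1.1 ∘ₗ (g.symm : Y.carrier →ₗ[A] Y.carrier) ∧
      q.1.2 = (f : X.carrier →ₗ[A] X.carrier) ∘ₗ p.1.2

/-- The Hall number `F^Z_{X Y}` for modules. -/
noncomputable def hallNum (X Y Z : ModB A) : ℕ := Nat.card (Quot (sesRel X Y Z))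

/-- An indecomposable module. -/
def Indec (M : ModB A) : Prop := ModIndec A M.carrier

/-- The finite direct sum `⊕_{i ∈ supp λ} λ(i)·(f i)` of modules. -/
def big {ι : Type} [DecidableEq ι] (f : ι → ModB A) (lam : ι →₀ ℕ) : ModB A where
  carrier := ∀ i : lam.support, Fin (lam i) → (f i).carrier
  finite := Module.Finite.pi

end ModB

/-- The parametrizing set of isomorphism classes of `A`-modules: multiplicity functions on the
positive roots (Gabriel's theorem). -/
def ModParam {n : ℕ} (Q : QuivData n) : Type := Q.PosRoot →₀ ℕ

/-- A realization over `k` of the parametrizing data for modules: a choice, for every positive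
root `α`, of an indecomposable module `M(α)` with dimension vector `α`. -/
structure MRealization (k : Type) [Field k] {n : ℕ} (Q : QuivData n) where
  Mobj : Q.PosRoot → ModB (PathAlg k Q)
  indec : ∀ α, (Mobj α).Indec
  dvec : ∀ α, dimVec k Q (Mobj α).carrier = α.1

/-- The module `M(λ) = ⊕_α λ(α) M(α)` attached to a parameter `λ`. -/
noncomputable def MRealization.obj {k : Type} [Field k] {n : ℕ} {Q : QuivData n}
    (R : MRealization k Q) (lam : ModParam Q) : ModB (PathAlg k Q) :=
  letI := Classical.decEq Q.PosRoot
  ModB.big R.Mobj lam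

/-- The degenerate Hall algebra `H₁(A)` of the path algebra `A = kQ`: basis indexed by the
isomorphism classes of modules, with structure constants the values at `1` of the Hall
polynomials of `mod A` (which exist by Ringel's theorem). -/
structure DegHallMod {n : ℕ} (Q : QuivData n) where
  carrier : Type w
  [ring : Ring carrier]
  [alg : Algebra ℂ carrier]
  bas : Module.Basis (ModParam Q) ℂ carrier
  mul_bas : ∀ μ ν lam : ModParam Q, ∃ ψ : Polynomial ℤ,
    (bas.repr (bas μ * bas ν)) lam = ((ψ.eval 1 : ℤ) : ℂ) ∧
    ∀ (p m : ℕ) [Fact p.Prime], 0 < m →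
      ∀ R : MRealization (GaloisField p m) Q,
        ψ.eval ((p : ℤ) ^ m) = ModB.hallNum (R.obj μ) (R.obj ν) (R.obj lam)

attribute [instance] DegHallMod.ring DegHallMod.alg

/-! ### Quotients by two-sided ideals -/

/-- The ring congruence generated by `s ~ 0` for `s ∈ S`; the corresponding quotient is the
quotient of `F` by the two-sided ideal generated by `S`. -/
def idealCon {F : Type w} [Ring F] (S : Set F) : RingCon F :=
  ringConGen (fun a b => a ∈ S ∧ b = 0)

/-- The quotient of `F` by the two-sided ideal generated by `S`. -/
def QuotBy {F : Type w} [Ring F] (S : Set F) : Type w := (idealCon S).Quotient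

noncomputable instance {F : Type w} [Ring F] (S : Set F) : Ring (QuotBy S) :=
  inferInstanceAs (Ring (idealCon S).Quotient)

noncomputable instance {F : Type w} [Ring F] [Algebra ℂ F] (S : Set F) :
    Algebra ℂ (QuotBy S) :=
  inferInstanceAs (Algebra ℂ (idealCon S).Quotient)

/-- The canonical projection onto the quotient by the two-sided ideal generated by `S`. -/
noncomputable def quotMap {F : Type w} [Ring F] [Algebra ℂ F] (S : Set F) :
    F →ₐ[ℂ] QuotBy S :=
  { (idealCon S).mk' with commutes' := fun _ => rfl }
/-- The dimension vector of the simple module `S_i`: the `i`-th unit vector. -/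
def unitVec {n : ℕ} (i : Fin n) : Fin n → ℕ := fun j => if j = i then 1 else 0

theorem unitVec_isPosRoot {n : ℕ} (Q : QuivData n) (hQ : Q.Acyclic) (i : Fin n) :
    unitVec i ≠ 0 ∧ Q.titsForm (unitVec i) = 1 := by
  have hii : Q.arrows i i = 0 := by
    by_contra h
    exact hQ i (Relation.TransGen.single h)
  constructor
  · intro h
    have := congrFun h i
    simp [unitVec] at this
  · have h1 : (∑ j, ((unitVec i j : ℤ)) ^ 2) = 1 := by
      simp [unitVec, apply_ite (fun t : ℕ => (t : ℤ)), Finset.sum_ite_eq']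
    have h2 : (∑ a, ∑ b, (Q.arrows a b : ℤ) * (unitVec i a : ℤ) * (unitVec i b : ℤ)) = 0 := by
      simp [unitVec, apply_ite (fun t : ℕ => (t : ℤ)), mul_ite, ite_mul,
        Finset.sum_ite_eq', hii]
    unfold QuivData.titsForm
    rw [h1, h2]
    ring

/-- `dim_k End_A(M)`. -/
noncomputable def endRank (k : Type) [Field k] {n : ℕ} (Q : QuivData n) (M : Type)
    [AddCommGroup M] [Module (PathAlg k Q) M] : ℕ :=
  letI : Module k M := Module.compHom M (algebraMap k (PathAlg k Q))
  letI : SMulCommClass (PathAlg k Q) k M :=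
    ⟨fun a c x => by
      show a • (algebraMap k (PathAlg k Q) c • x) = algebraMap k (PathAlg k Q) c • (a • x)
      rw [smul_smul, smul_smul, Algebra.commutes]⟩
  Module.finrank k (M →ₗ[PathAlg k Q] M)

/-!
Apply `Hom_A(-, L)`, `Hom_A(M, -)` and `Hom_A(N, -)` to `0 → M → L → N → 0`. By left
exactness of `Hom`,
`dim End(L) ≤ dim Hom(M, L) + dim Hom(N, L)`
`  ≤ (dim End(M) + dim Hom(M, N)) + (dim Hom(N, M) + dim End(N)) = dim End(M ⊕ N)`.
Equality forces `p ∘ - : Hom(N, L) → End(N)` to be onto, so `id_N` lifts along `p` and the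
sequence splits; conversely a splitting gives `L ≅ M ⊕ N`. All these dimensions are finite
because `kQ` is: for acyclic `Q` it is spanned by the vertex idempotents and the paths of `Q`,
which have length at most the number of vertices.
-/

namespace QuivData

variable {n : ℕ} (Q : QuivData n)

/-- `⟨i, j, a⟩` is the `a`-th arrow from `i` to `j`. -/
abbrev Arrow : Type := Σ i j : Fin n, Fin (Q.arrows i j)

/-- `t` can follow `s` in a path: the source of `t` is the target of `s`. -/
def Composable (t s : Q.Arrow) : Prop := t.1 = s.2.1

theorem step_of_composable {t s : Q.Arrow} (h : Q.Composable t s) : Q.Step s.2.1 t.2.1 :=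
  h ▸ t.2.2.pos.ne'

theorem nodup_map_of_isChain_composable (hQ : Q.Acyclic) {l : List Q.Arrow}
    (hl : l.IsChain Q.Composable) : (l.map fun t => t.2.1).Nodup := by
  have hchain : (l.map fun t => t.2.1).IsChain (Relation.TransGen (flip Q.Step)) :=
    ((List.isChain_map (fun t : Q.Arrow => t.2.1) (R := flip Q.Step)).2
      (hl.imp fun _ _ h => Q.step_of_composable h)).imp
      fun _ _ => Relation.TransGen.single
  refine List.Pairwise.imp (S := fun v w => v ≠ w) ?_ hchain.pairwise
  rintro v w h rfl
  exact hQ v (Relation.transGen_swap.1 h)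

theorem length_le_of_isChain_composable (hQ : Q.Acyclic) {l : List Q.Arrow}
    (hl : l.IsChain Q.Composable) : l.length ≤ n := by
  simpa using (Q.nodup_map_of_isChain_composable hQ hl).length_le_card

end QuivData

section PathAlgebra

variable {n : ℕ} (Q : QuivData n)

/-- `RingQuot.mkAlgHom`, with target `PathAlg k Q` rather than `RingQuot (PathRel k Q)`, so that
rewriting with `map_mul` works in `PathAlg k Q`. -/
noncomputable def mkPath : FreeAlgebra k Q.Gens →ₐ[k] PathAlg k Q :=
  RingQuot.mkAlgHom k (PathRel k Q)

noncomputable def genElt (g : Q.Gens) : PathAlg k Q := mkPath k Q (FreeAlgebra.ι k g)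

noncomputable def arrowElt (t : Q.Arrow) : PathAlg k Q := genElt k Q (Sum.inr t)

noncomputable def pathElt (l : List Q.Arrow) : PathAlg k Q := (l.map (arrowElt k Q)).prod

variable {k Q}

theorem eVert_mul_eVert_of_ne {i j : Fin n} (h : i ≠ j) : eVert k Q i * eVert k Q j = 0 :=
  (map_mul _ _ _).symm.trans <|
    (RingQuot.mkAlgHom_rel k (PathRel.orth (k := k) (Q := Q) i j h)).trans (map_zero _)

theorem eVert_mul_arrowElt_mul_eVert (t : Q.Arrow) :
    eVert k Q t.2.1 * arrowElt k Q t * eVert k Q t.1 = arrowElt k Q t := by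
  change mkPath k Q (FreeAlgebra.ι k (.inl t.2.1)) * mkPath k Q (FreeAlgebra.ι k (.inr t)) *
    mkPath k Q (FreeAlgebra.ι k (.inl t.1)) = mkPath k Q (FreeAlgebra.ι k (.inr t))
  rw [← map_mul, ← map_mul]
  exact RingQuot.mkAlgHom_rel k (PathRel.arrow _ _ t.2.2)

theorem eVert_mul_arrowElt (t : Q.Arrow) : eVert k Q t.2.1 * arrowElt k Q t = arrowElt k Q t := by
  conv_lhs => rw [← eVert_mul_arrowElt_mul_eVert t]
  rw [← mul_assoc, ← mul_assoc, eVert_mul_self, eVert_mul_arrowElt_mul_eVert]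

theorem arrowElt_mul_eVert (t : Q.Arrow) : arrowElt k Q t * eVert k Q t.1 = arrowElt k Q t := by
  conv_lhs => rw [← eVert_mul_arrowElt_mul_eVert t]
  rw [mul_assoc, eVert_mul_self, eVert_mul_arrowElt_mul_eVert]

theorem eVert_mul_arrowElt_of_ne {i : Fin n} {t : Q.Arrow} (h : i ≠ t.2.1) :
    eVert k Q i * arrowElt k Q t = 0 := by
  rw [← eVert_mul_arrowElt t, ← mul_assoc, eVert_mul_eVert_of_ne h, zero_mul]

theorem arrowElt_mul_eVert_of_ne {t : Q.Arrow} {i : Fin n} (h : i ≠ t.1) :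
    arrowElt k Q t * eVert k Q i = 0 := by
  rw [← arrowElt_mul_eVert t, mul_assoc, eVert_mul_eVert_of_ne (Ne.symm h), mul_zero]

theorem arrowElt_mul_arrowElt_of_not_composable {t s : Q.Arrow} (h : ¬ Q.Composable t s) :
    arrowElt k Q t * arrowElt k Q s = 0 := by
  rw [← arrowElt_mul_eVert t, ← eVert_mul_arrowElt s, mul_assoc, ← mul_assoc (eVert k Q t.1),
    eVert_mul_eVert_of_ne h, zero_mul, mul_zero]

variable (k Q)

def pathSpanningSet : Set (PathAlg k Q) :=
  insert 0 (Set.range (eVert k Q) ∪ pathElt k Q '' {l | l.IsChain Q.Composable})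

variable {k Q}

theorem pathElt_mem_pathSpanningSet {l : List Q.Arrow} (hl : l.IsChain Q.Composable) :
    pathElt k Q l ∈ pathSpanningSet k Q :=
  .inr (.inr ⟨l, hl, rfl⟩)

theorem eVert_mul_mem_pathSpanningSet (i : Fin n) {x : PathAlg k Q}
    (hx : x ∈ pathSpanningSet k Q) : eVert k Q i * x ∈ pathSpanningSet k Q := by
  rcases hx with rfl | ⟨j, rfl⟩ | ⟨_ | ⟨t, l⟩, hl, rfl⟩
  · exact .inl (mul_zero _)
  · by_cases hij : i = j
    · subst hij
      exact .inr (.inl ⟨i, (eVert_mul_self k Q i).symm⟩)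
    · exact .inl (eVert_mul_eVert_of_ne hij)
  · exact .inr (.inl ⟨i, (mul_one _).symm⟩)
  · simp only [pathElt, List.map_cons, List.prod_cons, ← mul_assoc]
    by_cases hi : i = t.2.1
    · subst hi
      rw [eVert_mul_arrowElt]
      exact pathElt_mem_pathSpanningSet hl
    · rw [eVert_mul_arrowElt_of_ne hi, zero_mul]
      exact .inl rfl

theorem arrowElt_mul_mem_pathSpanningSet (t : Q.Arrow) {x : PathAlg k Q}
    (hx : x ∈ pathSpanningSet k Q) : arrowElt k Q t * x ∈ pathSpanningSet k Q := by
  rcases hx with rfl | ⟨j, rfl⟩ | ⟨_ | ⟨s, l⟩, hl, rfl⟩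
  · exact .inl (mul_zero _)
  · by_cases hj : j = t.1
    · subst hj
      rw [arrowElt_mul_eVert]
      simpa [pathElt] using pathElt_mem_pathSpanningSet (k := k) (List.IsChain.singleton t)
    · exact .inl (arrowElt_mul_eVert_of_ne hj)
  · simpa [pathElt] using pathElt_mem_pathSpanningSet (k := k) (List.IsChain.singleton t)
  · by_cases hts : Q.Composable t s
    · simpa [pathElt] using
        pathElt_mem_pathSpanningSet (k := k) (List.IsChain.cons_cons hts hl)
    · simp only [pathElt, List.map_cons, List.prod_cons, ← mul_assoc,
        arrowElt_mul_arrowElt_of_not_composable hts, zero_mul]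
      exact .inl rfl

theorem closure_range_genElt_subset_pathSpanningSet :
    (Submonoid.closure (Set.range (genElt k Q)) : Set (PathAlg k Q)) ⊆ pathSpanningSet k Q := by
  intro x hx
  induction hx using Submonoid.closure_induction_left with
  | one => exact pathElt_mem_pathSpanningSet (l := []) .nil
  | mul_left g hg x _ hx =>
    obtain ⟨i | t, rfl⟩ := hg
    · exact eVert_mul_mem_pathSpanningSet i hx
    · exact arrowElt_mul_mem_pathSpanningSet t hx

theorem pathSpanningSet_finite (hQ : Q.Acyclic) : (pathSpanningSet k Q).Finite := by
  refine .insert 0 (.union (Set.finite_range _) (.image _ ?_))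
  exact (List.finite_length_le Q.Arrow n).subset fun l hl =>
    Q.length_le_of_isChain_composable hQ hl

theorem span_closure_range_genElt :
    Submodule.span k (Submonoid.closure (Set.range (genElt k Q)) : Set (PathAlg k Q)) = ⊤ := by
  have hrange : Set.range (genElt k Q) = mkPath k Q '' Set.range (FreeAlgebra.ι k) :=
    Set.range_comp _ _
  rw [← Algebra.adjoin_eq_span, hrange, Algebra.adjoin_image, FreeAlgebra.adjoin_range_ι,
    Algebra.map_top, (AlgHom.range_eq_top (mkPath k Q)).2 (RingQuot.mkAlgHom_surjective k _),
    Algebra.top_toSubmodule]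

theorem pathAlg_finite (hQ : Q.Acyclic) : Module.Finite k (PathAlg k Q) := by
  refine ⟨⟨(pathSpanningSet_finite hQ).toFinset, eq_top_iff.2 ?_⟩⟩
  rw [Set.Finite.coe_toFinset, ← span_closure_range_genElt]
  exact Submodule.span_mono closure_range_genElt_subset_pathSpanningSet

end PathAlgebra

open Module

namespace Function.Exact

section FinrankOfExact

variable {K U V W : Type*} [Field K] [AddCommGroup U] [Module K U] [AddCommGroup V] [Module K V]
  [AddCommGroup W] [Module K W] [FiniteDimensional K V] {f : U →ₗ[K] V} {g : V →ₗ[K] W}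

theorem finrank_eq_add_finrank_range (h : Exact f g) (hf : Injective f) :
    finrank K V = finrank K U + finrank K (LinearMap.range g) := by
  rw [← LinearMap.finrank_range_of_inj hf, ← h.linearMap_ker_eq, add_comm]
  exact (LinearMap.finrank_range_add_finrank_ker g).symm

variable [FiniteDimensional K W]

theorem finrank_le_add_finrank (h : Exact f g) (hf : Injective f) :
    finrank K V ≤ finrank K U + finrank K W :=
  h.finrank_eq_add_finrank_range hf ▸ Nat.add_le_add_left (Submodule.finrank_le _) _

theorem surjective_of_add_finrank_le (h : Exact f g) (hf : Injective f)
    (hle : finrank K U + finrank K W ≤ finrank K V) : Surjective g := by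
  rw [← LinearMap.range_eq_top]
  refine Submodule.eq_top_of_finrank_eq ?_
  have := h.finrank_eq_add_finrank_range hf
  have := Submodule.finrank_le (LinearMap.range g)
  omega

end FinrankOfExact

section HomExact

variable {R A : Type*} [CommSemiring R] [Ring A]
  {M L N : Type*} (X : Type*) [AddCommGroup M] [Module A M] [AddCommGroup L] [Module A L]
  [AddCommGroup N] [Module A N] [AddCommGroup X] [Module A X] {ι : M →ₗ[A] L} {p : L →ₗ[A] N}

theorem lcomp_of_surjective [Module R X] [SMulCommClass A R X] (h : Exact ι p)
    (hp : Surjective p) : Exact (LinearMap.lcomp R X p) (LinearMap.lcomp R X ι) := by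
  refine LinearMap.exact_of_comp_of_mem_range ?_ fun g (hg : g ∘ₗ ι = 0) => ?_
  · ext g m
    simp [h.apply_apply_eq_zero]
  · refine ⟨(LinearMap.range ι).liftQ g (LinearMap.range_le_ker_iff.2 hg) ∘ₗ
      (h.linearEquivOfSurjective hp).symm.toLinearMap, ?_⟩
    ext x
    simp

theorem compRight_of_injective [Algebra R A] [Module R M] [Module R L] [Module R N]
    [IsScalarTower R A M] [IsScalarTower R A L] [IsScalarTower R A N] (h : Exact ι p)
    (hι : Injective ι) :
    Exact (LinearMap.compRight R (M := X) ι) (LinearMap.compRight R (M := X) p) := by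
  refine LinearMap.exact_of_comp_of_mem_range ?_ fun g (hg : p ∘ₗ g = 0) => ?_
  · ext g x
    simp [h.apply_apply_eq_zero]
  · have hrange : ∀ x, g x ∈ LinearMap.range ι := fun x =>
      (h (g x)).1 (LinearMap.congr_fun hg x)
    refine ⟨(LinearEquiv.ofInjective ι hι).symm.toLinearMap ∘ₗ
      g.codRestrict (LinearMap.range ι) hrange, ?_⟩
    ext x
    simp

end HomExact

end Function.Exact

section EndOfExtension

variable {K A : Type*} [Field K] [Ring A] [Algebra K A]

instance Module.Finite.linearMap_of_isScalarTower (X Y : Type*) [AddCommGroup X] [Module A X]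
    [Module K X] [IsScalarTower K A X] [AddCommGroup Y] [Module A Y] [Module K Y]
    [IsScalarTower K A Y] [FiniteDimensional K X] [FiniteDimensional K Y] :
    FiniteDimensional K (X →ₗ[A] Y) :=
  .of_injective (LinearMap.restrictScalarsₗ K A X Y K) (LinearMap.restrictScalars_injective K)

variable {M L N : Type*} [AddCommGroup M] [Module A M] [Module K M] [IsScalarTower K A M]
  [AddCommGroup L] [Module A L] [Module K L] [IsScalarTower K A L]
  [AddCommGroup N] [Module A N] [Module K N] [IsScalarTower K A N]

theorem LinearEquiv.finrank_linearMap_self_eq (e : L ≃ₗ[A] N) :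
    finrank K (L →ₗ[A] L) = finrank K (N →ₗ[A] N) :=
  LinearEquiv.finrank_eq { e.conjRingEquiv with
    map_smul' := fun c f => by ext x; exact e.toLinearMap.map_smul_of_tower c _ }

variable {ι : M →ₗ[A] L} {p : L →ₗ[A] N}

theorem Function.Exact.finrank_end_eq_of_section (h : Exact ι p) (hι : Injective ι)
    {s : N →ₗ[A] L} (hs : p ∘ₗ s = LinearMap.id) :
    finrank K (L →ₗ[A] L) = finrank K (M × N →ₗ[A] M × N) :=
  (h.splitSurjectiveEquiv hι ⟨s, hs⟩).1.finrank_linearMap_self_eq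

variable [FiniteDimensional K M] [FiniteDimensional K L] [FiniteDimensional K N]

theorem finrank_linearMap_prod_prod :
    finrank K (M × N →ₗ[A] M × N) = finrank K (M →ₗ[A] M) + finrank K (M →ₗ[A] N) +
      (finrank K (N →ₗ[A] M) + finrank K (N →ₗ[A] N)) := by
  rw [← (LinearMap.coprodEquiv K).finrank_eq, Module.finrank_prod,
    ← (LinearMap.prodEquiv K).finrank_eq, ← (LinearMap.prodEquiv K).finrank_eq,
    Module.finrank_prod, Module.finrank_prod]

namespace Function.Exact

theorem finrank_end_le_add (h : Exact ι p) (hι : Injective ι) (hp : Surjective p) :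
    finrank K (L →ₗ[A] L) ≤
      finrank K (M →ₗ[A] M) + finrank K (M →ₗ[A] N) + finrank K (N →ₗ[A] L) := by
  have hL := (h.lcomp_of_surjective (R := K) L hp).finrank_le_add_finrank
    (LinearMap.lcomp_injective_of_surjective _ hp)
  have hM := (h.compRight_of_injective (R := K) M hι).finrank_le_add_finrank
    hι.injective_linearMapComp_left
  omega

theorem finrank_end_le_finrank_end_prod (h : Exact ι p) (hι : Injective ι) (hp : Surjective p) :
    finrank K (L →ₗ[A] L) ≤ finrank K (M × N →ₗ[A] M × N) := by
  have hN := (h.compRight_of_injective (R := K) N hι).finrank_le_add_finrank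
    hι.injective_linearMapComp_left
  have := h.finrank_end_le_add (K := K) hι hp
  rw [finrank_linearMap_prod_prod]
  omega

theorem exists_section_of_finrank_end_eq (h : Exact ι p) (hι : Injective ι) (hp : Surjective p)
    (heq : finrank K (L →ₗ[A] L) = finrank K (M × N →ₗ[A] M × N)) :
    ∃ s : N →ₗ[A] L, p ∘ₗ s = LinearMap.id := by
  have := h.finrank_end_le_add (K := K) hι hp
  rw [finrank_linearMap_prod_prod] at heq
  exact (h.compRight_of_injective (R := K) N hι).surjective_of_add_finrank_le
    hι.injective_linearMapComp_left (by omega) LinearMap.id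

end Function.Exact

end EndOfExtension

/-- For every short exact sequence `0 → M → L → N → 0` of finite dimensional
modules over the path algebra `A = kQ` of a finite acyclic quiver, one has
`dim_k End_A(L) ≤ dim_k End_A(M ⊕ N)`, with equality if and only if the sequence splits. -/
theorem dim_end_le_of_ses {n : ℕ} (k : Type) [Field k] (Q : QuivData n) (hQ : Q.Acyclic)
    (M L N : Type) [AddCommGroup M] [Module (PathAlg k Q) M]
    [AddCommGroup L] [Module (PathAlg k Q) L] [AddCommGroup N] [Module (PathAlg k Q) N]
    [Module.Finite (PathAlg k Q) M] [Module.Finite (PathAlg k Q) L]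
    [Module.Finite (PathAlg k Q) N]
    (ι : M →ₗ[PathAlg k Q] L) (p : L →ₗ[PathAlg k Q] N)
    (hι : Function.Injective ι) (hp : Function.Surjective p)
    (hexact : LinearMap.range ι = LinearMap.ker p) :
    endRank k Q L ≤ endRank k Q (M × N) ∧
      (endRank k Q L = endRank k Q (M × N) ↔
        ∃ s : N →ₗ[PathAlg k Q] L, p ∘ₗ s = LinearMap.id) := by
  let : Module k M := .compHom M (algebraMap k (PathAlg k Q))
  let : Module k L := .compHom L (algebraMap k (PathAlg k Q))
  let : Module k N := .compHom N (algebraMap k (PathAlg k Q))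
  have : IsScalarTower k (PathAlg k Q) M := .of_algebraMap_smul fun _ _ => rfl
  have : IsScalarTower k (PathAlg k Q) L := .of_algebraMap_smul fun _ _ => rfl
  have : IsScalarTower k (PathAlg k Q) N := .of_algebraMap_smul fun _ _ => rfl
  have : Module.Finite k (PathAlg k Q) := pathAlg_finite hQ
  have : FiniteDimensional k M := Module.Finite.trans (PathAlg k Q) M
  have : FiniteDimensional k L := Module.Finite.trans (PathAlg k Q) L
  have : FiniteDimensional k N := Module.Finite.trans (PathAlg k Q) N
  have h : Function.Exact ι p := LinearMap.exact_iff.2 hexact.symm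
  exact ⟨h.finrank_end_le_finrank_end_prod hι hp,
    h.exists_section_of_finrank_end_eq hι hp, fun ⟨_, hs⟩ => h.finrank_end_eq_of_section hι hs⟩
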